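/- arXiv:1712.02171 — 10 statements merged into one kernel-verified Lean document; each statement's English description precedes it below -/
import Mathlib

section
/- Let d : ℝ → ℝ satisfy the Leibniz rule d(xy) = x·d(y) + y·d(x) for all x, y ∈ ℝ. Let Ω ⊆ ℝ be a nonempty open set and let f, g : Ω → ℝ be differentiable functions that are positive on Ω, and assume d is a derivation with respect to f and a derivation with respect to g. Then, for all rational numbers r, s ∈ ℚ, d is a derivation with respect to the function x ↦ f(x)^r · g(x)^s on Ω. -/
/-! Along `exp`, the Leibniz rule makes the logarithmic derivative `t ↦ d (exp t) / exp t` an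
additive map `ℝ → ℝ`, hence `ℚ`-linear. Since `a ^ q = exp (log a * q)`, this gives the power rule
`d (a ^ q) = q * a ^ (q - 1) * d a` for `a > 0` and rational `q`; the theorem then follows from the
chain rule for `f ^ r`, `g ^ s` and the product rule, which `d` and `deriv` both satisfy. -/

open Real

def IsDerivationWrt (d f : ℝ → ℝ) (Ω : Set ℝ) : Prop :=
  ∀ x ∈ Ω, d (f x) = deriv f x * d x

section Leibniz

variable {d : ℝ → ℝ} (hleib : ∀ x y : ℝ, d (x * y) = x * d y + y * d x)
include hleib

noncomputable def logDerivExpHom : ℝ →+ ℝ :=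
  AddMonoidHom.mk' (fun t => d (exp t) / exp t) fun s t => by
    rw [exp_add, hleib]
    field_simp
    ring

theorem leibniz_rpow_ratCast {a : ℝ} (ha : 0 < a) (q : ℚ) :
    d (a ^ (q : ℝ)) = q * a ^ ((q : ℝ) - 1) * d a := by
  have hψ : ∀ t, d (exp t) = exp t * logDerivExpHom hleib t := fun t => by
    simp only [logDerivExpHom, AddMonoidHom.mk'_apply]
    field_simp
  have hlog : logDerivExpHom hleib (log a) = d a / a := by
    simp only [logDerivExpHom, AddMonoidHom.mk'_apply, exp_log ha]
  have hq : logDerivExpHom hleib (log a * q) = q * logDerivExpHom hleib (log a) := by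
    simpa only [smul_eq_mul, mul_comm] using map_ratCast_smul (logDerivExpHom hleib) ℝ ℝ q (log a)
  rw [rpow_def_of_pos ha, hψ, hq, hlog, ← rpow_def_of_pos ha, rpow_sub_one ha.ne']
  field_simp

theorem IsDerivationWrt.rpow_ratCast {f : ℝ → ℝ} {Ω : Set ℝ} (hdf : IsDerivationWrt d f Ω)
    (hf : ∀ x ∈ Ω, DifferentiableAt ℝ f x) (hfpos : ∀ x ∈ Ω, 0 < f x) (q : ℚ) :
    IsDerivationWrt d (fun x => f x ^ (q : ℝ)) Ω := fun x hx => by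
  rw [deriv_rpow_const (hf x hx) (Or.inl (hfpos x hx).ne'),
    leibniz_rpow_ratCast hleib (hfpos x hx), hdf x hx]
  ring

theorem IsDerivationWrt.mul {f g : ℝ → ℝ} {Ω : Set ℝ} (hdf : IsDerivationWrt d f Ω)
    (hdg : IsDerivationWrt d g Ω) (hf : ∀ x ∈ Ω, DifferentiableAt ℝ f x)
    (hg : ∀ x ∈ Ω, DifferentiableAt ℝ g x) :
    IsDerivationWrt d (fun x => f x * g x) Ω := fun x hx => by
  rw [deriv_fun_mul (hf x hx) (hg x hx), hleib, hdf x hx, hdg x hx]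
  ring

end Leibniz

theorem derivation_wrt_rpow_product_general
    (d : ℝ → ℝ) (hleib : ∀ x y : ℝ, d (x * y) = x * d y + y * d x)
    (Ω : Set ℝ)
    (f g : ℝ → ℝ)
    (hf : ∀ x ∈ Ω, DifferentiableAt ℝ f x)
    (hg : ∀ x ∈ Ω, DifferentiableAt ℝ g x)
    (hfpos : ∀ x ∈ Ω, 0 < f x)
    (hgpos : ∀ x ∈ Ω, 0 < g x)
    (hdf : ∀ x ∈ Ω, d (f x) = deriv f x * d x)
    (hdg : ∀ x ∈ Ω, d (g x) = deriv g x * d x) :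
    ∀ (r s : ℚ), ∀ x ∈ Ω,
      d (f x ^ (r : ℝ) * g x ^ (s : ℝ)) =
        deriv (fun y => f y ^ (r : ℝ) * g y ^ (s : ℝ)) x * d x := by
  intro r s
  have hfr : ∀ x ∈ Ω, DifferentiableAt ℝ (fun y => f y ^ (r : ℝ)) x := fun x hx =>
    (hf x hx).rpow_const (Or.inl (hfpos x hx).ne')
  have hgs : ∀ x ∈ Ω, DifferentiableAt ℝ (fun y => g y ^ (s : ℝ)) x := fun x hx =>
    (hg x hx).rpow_const (Or.inl (hgpos x hx).ne')
  exact ((IsDerivationWrt.rpow_ratCast hleib hdf hf hfpos r).mul hleib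
    (IsDerivationWrt.rpow_ratCast hleib hdg hg hgpos s) hfr hgs)

/-- If `d : ℝ → ℝ` satisfies the Leibniz rule and is a derivation with respect to the
positive differentiable functions `f` and `g` on the nonempty open set `Ω`, then for all
rationals `r, s`, `d` is a derivation with respect to `x ↦ f x ^ r * g x ^ s`. -/
theorem derivation_wrt_rpow_product
    (d : ℝ → ℝ) (hleib : ∀ x y : ℝ, d (x * y) = x * d y + y * d x)
    (Ω : Set ℝ) (hΩ : IsOpen Ω) (hne : Ω.Nonempty)
    (f g : ℝ → ℝ)
    (hf : ∀ x ∈ Ω, DifferentiableAt ℝ f x)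
    (hg : ∀ x ∈ Ω, DifferentiableAt ℝ g x)
    (hfpos : ∀ x ∈ Ω, 0 < f x)
    (hgpos : ∀ x ∈ Ω, 0 < g x)
    (hdf : ∀ x ∈ Ω, d (f x) = deriv f x * d x)
    (hdg : ∀ x ∈ Ω, d (g x) = deriv g x * d x) :
    ∀ (r s : ℚ), ∀ x ∈ Ω,
      d (f x ^ (r : ℝ) * g x ^ (s : ℝ)) =
        deriv (fun y => f y ^ (r : ℝ) * g y ^ (s : ℝ)) x * d x :=
  derivation_wrt_rpow_product_general d hleib Ω f g hf hg hfpos hgpos hdf hdg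
end

section
/- Let d : ℝ → ℝ satisfy the Leibniz rule d(xy) = x·d(y) + y·d(x) for all x, y ∈ ℝ, and let U ⊆ ℝ be a set such that for every t ∈ ℝ \ {0, −1} the set H_t := {t, 1/t, −1 − 1/t, −t/(1+t), −1/(1+t), −1 − t} intersects U. Assume that d(u) = d(u+1) for all u ∈ U. Then d is additive, i.e., d(x+y) = d(x) + d(y) for all x, y ∈ ℝ, and hence d is a standard derivation. -/
/-!
Let `f x = d (x + 1) - d x`. From the Leibniz rule alone, `f (t⁻¹) = f t / t` and
`f (-1 - t) = f t`. The two involutions `t ↦ t⁻¹` and `t ↦ -1 - t` generate a group of order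
six whose orbit of `t` is exactly `H_t`, and along the orbit `f` only gets multiplied by nonzero
factors. So `f` vanishes at `t` as soon as it vanishes somewhere on `H_t`, which the hypothesis on
`U` guarantees; thus `d (x + 1) = d x` everywhere, and writing `x + y = x * (y / x + 1)` turns
the Leibniz rule into additivity.
-/

def IsLeibniz {R : Type*} [Mul R] [Add R] (d : R → R) : Prop :=
  ∀ x y, d (x * y) = x * d y + y * d x

namespace IsLeibniz

section CommRing

variable {R : Type*} [CommRing R] {d : R → R}

theorem map_zero (hd : IsLeibniz d) : d 0 = 0 := by
  simpa using hd 0 0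

theorem map_one (hd : IsLeibniz d) : d 1 = 0 := by
  have h := hd 1 1
  simp only [mul_one, one_mul] at h
  linear_combination -h

-- `-2 * d (-1) = d 1 = 0`; when `2 = 0` instead, `-1 = 1`.
theorem map_neg_one [NoZeroDivisors R] (hd : IsLeibniz d) : d (-1) = 0 := by
  have h := hd (-1) (-1)
  rw [neg_one_mul, neg_neg, hd.map_one] at h
  rcases mul_eq_zero.mp (show (2 : R) * d (-1) = 0 by linear_combination h) with h2 | h2
  · rw [show (-1 : R) = 1 by linear_combination -h2]
    exact hd.map_one
  · exact h2

theorem map_neg [NoZeroDivisors R] (hd : IsLeibniz d) (x : R) : d (-x) = -d x := by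
  simpa [hd.map_neg_one] using hd (-1) x

end CommRing

section Field

variable {K : Type*} [Field K] {d : K → K}

theorem map_inv (hd : IsLeibniz d) (x : K) : d x⁻¹ = -d x / x ^ 2 := by
  rcases eq_or_ne x 0 with rfl | hx
  · simp [hd.map_zero]
  have h := hd x x⁻¹
  rw [mul_inv_cancel₀ hx, hd.map_one] at h
  rw [eq_div_iff (pow_ne_zero 2 hx)]
  linear_combination -x * h - d x * mul_inv_cancel₀ hx

theorem map_add_of_map_add_one (hd : IsLeibniz d) (hshift : ∀ x, d (x + 1) = d x) (x y : K) :
    d (x + y) = d x + d y := by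
  rcases eq_or_ne x 0 with rfl | hx
  · simp [hd.map_zero]
  have hdiv : d (y / x) = y * (-d x / x ^ 2) + x⁻¹ * d y := by
    rw [div_eq_mul_inv, hd, hd.map_inv]
  calc d (x + y) = d (x * (y / x + 1)) := by congr 1; field_simp; ring
    _ = d x + d y := by
      rw [hd, hshift, hdiv]
      field_simp
      ring

end Field

end IsLeibniz

section ShiftDefect

variable {K : Type*} [Field K]

def shiftDefect (d : K → K) (x : K) : K := d (x + 1) - d x

variable {d : K → K}

theorem IsLeibniz.shiftDefect_zero (hd : IsLeibniz d) : shiftDefect d 0 = 0 := by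
  simp [shiftDefect, hd.map_zero, hd.map_one]

theorem IsLeibniz.shiftDefect_inv (hd : IsLeibniz d) (t : K) :
    shiftDefect d t⁻¹ = shiftDefect d t / t := by
  rcases eq_or_ne t 0 with rfl | ht
  · simp [hd.shiftDefect_zero]
  have h := hd (1 + t) t⁻¹
  rw [show (1 + t) * t⁻¹ = t⁻¹ + 1 by field_simp, hd.map_inv] at h
  rw [shiftDefect, shiftDefect, h, hd.map_inv, add_comm t 1]
  field_simp
  ring

theorem IsLeibniz.shiftDefect_neg_one_sub (hd : IsLeibniz d) (t : K) :
    shiftDefect d (-1 - t) = shiftDefect d t := by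
  rw [shiftDefect, shiftDefect, show -1 - t + 1 = -t by ring, show -1 - t = -(t + 1) by ring,
    hd.map_neg, hd.map_neg]
  ring

end ShiftDefect

theorem eq_zero_of_eq_zero_on_orbit {K : Type*} [Field K] {f : K → K}
    (hinv : ∀ t, f t⁻¹ = f t / t) (hrefl : ∀ t, f (-1 - t) = f t)
    {t u : K} (ht : t ≠ 0) (ht' : t ≠ -1)
    (hu : u ∈ ({t, 1 / t, -1 - 1 / t, -t / (1 + t), -1 / (1 + t), -1 - t} : Set K))
    (hfu : f u = 0) : f t = 0 := by
  have h1t : -1 - t ≠ 0 := fun h => ht' (by linear_combination -h)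
  have h1t' : 1 + t ≠ 0 := fun h => ht' (by linear_combination h)
  have hrecip : f (-1 - t)⁻¹ = f t / (-1 - t) := by rw [hinv, hrefl]
  simp only [Set.mem_insert_iff, Set.mem_singleton_iff] at hu
  rcases hu with rfl | rfl | rfl | rfl | rfl | rfl
  · exact hfu
  · rw [one_div, hinv, div_eq_zero_iff] at hfu
    exact hfu.resolve_right ht
  · rw [one_div, hrefl, hinv, div_eq_zero_iff] at hfu
    exact hfu.resolve_right ht
  · rw [show -t / (1 + t) = -1 - (-1 - t)⁻¹ by field_simp; ring, hrefl, hrecip,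
      div_eq_zero_iff] at hfu
    exact hfu.resolve_right h1t
  · rw [show -1 / (1 + t) = (-1 - t)⁻¹ by field_simp; ring, hrecip, div_eq_zero_iff] at hfu
    exact hfu.resolve_right h1t
  · rwa [hrefl] at hfu

/-- Basic Lemma: if `d : ℝ → ℝ` satisfies the Leibniz rule, `U ⊆ ℝ` intersects the set
`H_t = {t, 1/t, -1-1/t, -t/(1+t), -1/(1+t), -1-t}` for every `t ∉ {0, -1}`, and
`d u = d (u + 1)` for all `u ∈ U`, then `d` is additive, hence a standard derivation. -/
theorem additive_of_leibniz_of_Ht_intersects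
    (d : ℝ → ℝ) (hleib : ∀ x y : ℝ, d (x * y) = x * d y + y * d x)
    (U : Set ℝ)
    (hU : ∀ t : ℝ, t ≠ 0 → t ≠ -1 →
      (({t, 1 / t, -1 - 1 / t, -t / (1 + t), -1 / (1 + t), -1 - t} : Set ℝ) ∩ U).Nonempty)
    (hd : ∀ u ∈ U, d u = d (u + 1)) :
    ∀ x y : ℝ, d (x + y) = d x + d y := by
  have hleib : IsLeibniz d := hleib
  have hdefect : ∀ t, shiftDefect d t = 0 := by
    intro t
    rcases eq_or_ne t 0 with rfl | ht
    · exact hleib.shiftDefect_zero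
    rcases eq_or_ne t (-1) with rfl | ht'
    · simpa using (hleib.shiftDefect_neg_one_sub 0).trans hleib.shiftDefect_zero
    obtain ⟨u, hu, huU⟩ := hU t ht ht'
    exact eq_zero_of_eq_zero_on_orbit hleib.shiftDefect_inv hleib.shiftDefect_neg_one_sub
      ht ht' hu (by simp [shiftDefect, hd u huU])
  exact hleib.map_add_of_map_add_one fun x => sub_eq_zero.mp (hdefect x)
end

section
/- Let d : ℝ → ℝ satisfy the Leibniz rule d(xy) = x·d(y) + y·d(x) for all x, y ∈ ℝ, and let R ⊆ (0,1) be a set such that 1 ∉ R + R, where R + R := {r + s : r, s ∈ R}. Assume that d(u) = d(u+1) for all u ∈ ℝ \ (ℤ + R), where ℤ + R := {n + r : n ∈ ℤ, r ∈ R}. Then d is additive, and hence d is a standard derivation. -/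
/-- If `d : ℝ → ℝ` satisfies the Leibniz rule, `R ⊆ (0,1)` with `1 ∉ R + R`, and
`d u = d (u + 1)` for all `u ∉ ℤ + R`, then `d` is additive, hence a standard derivation. -/
theorem additive_of_leibniz_of_R_sum
    (d : ℝ → ℝ) (hleib : ∀ x y : ℝ, d (x * y) = x * d y + y * d x)
    (R : Set ℝ) (hR : R ⊆ Set.Ioo 0 1)
    (hsum : ∀ r ∈ R, ∀ s ∈ R, r + s ≠ 1)
    (hd : ∀ u : ℝ, (¬ ∃ (n : ℤ) (r : ℝ), r ∈ R ∧ u = (n : ℝ) + r) → d u = d (u + 1)) :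
    ∀ x y : ℝ, d (x + y) = d x + d y := by
  have h0 : d 0 = 0 := by have := hleib 0 0; simpa using this
  have h1 : d 1 = 0 := by
    have := hleib 1 1; simp at this; linarith
  have hm1 : d (-1) = 0 := by
    have := hleib (-1) (-1); simp at this; linarith
  have hneg : ∀ x : ℝ, d (-x) = - d x := by
    intro x
    have h := hleib (-1) x
    have e : (-1 : ℝ) * x = -x := by ring
    rw [e, hm1] at h
    linarith
  -- u and -u cannot both be in ℤ + R
  have hC : ∀ u : ℝ, (∃ (n : ℤ) (r : ℝ), r ∈ R ∧ u = (n : ℝ) + r) →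
      ¬ (∃ (n : ℤ) (r : ℝ), r ∈ R ∧ -u = (n : ℝ) + r) := by
    rintro u ⟨n, r, hr, rfl⟩ ⟨m, s, hs, heq⟩
    have hr' := hR hr
    have hs' := hR hs
    have hint : r + s = ((-(n + m) : ℤ) : ℝ) := by push_cast; linarith
    have hk1 : (0 : ℤ) < -(n + m) := by
      have : (0 : ℝ) < ((-(n + m) : ℤ) : ℝ) := by
        rw [← hint]; linarith [hr'.1, hs'.1]
      exact_mod_cast this
    have hk2 : (-(n + m) : ℤ) < 2 := by
      have : ((-(n + m) : ℤ) : ℝ) < 2 := by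
        rw [← hint]; linarith [hr'.2, hs'.2]
      exact_mod_cast this
    have hk : (-(n + m) : ℤ) = 1 := by omega
    have : r + s = 1 := by rw [hint, hk]; norm_num
    exact hsum r hr s hs this
  -- d has period 1 everywhere
  have hD : ∀ u : ℝ, d (u + 1) = d u := by
    intro u
    by_cases h : ∃ (n : ℤ) (r : ℝ), r ∈ R ∧ u = (n : ℝ) + r
    · have hnu := hC u h
      have hnu1 : ¬ ∃ (n : ℤ) (r : ℝ), r ∈ R ∧ (-u - 1) = (n : ℝ) + r := by
        rintro ⟨n, r, hr, he⟩
        exact hnu ⟨n + 1, r, hr, by push_cast; linarith⟩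
      have a3 : d (-u - 1) = d (-u) := by
        have h3 := hd (-u - 1) hnu1
        have e3 : (-u - 1 + 1 : ℝ) = -u := by ring
        rw [e3] at h3
        exact h3
      have a1 : d (-(u + 1)) = - d (u + 1) := hneg _
      have a2 : d (-u) = - d u := hneg _
      have a4 : (-(u + 1) : ℝ) = -u - 1 := by ring
      rw [a4] at a1
      linarith
    · exact (hd u h).symm
  -- main computation
  intro x y
  by_cases hx : x = 0
  · subst hx; simp [h0]
  · have key : d (x * (1 + y / x)) = x * d (1 + y / x) + (1 + y / x) * d x := hleib _ _
    have e : x * (1 + y / x) = x + y := by field_simp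
    rw [e] at key
    have hper : d (1 + y / x) = d (y / x) := by
      rw [add_comm]; exact hD (y / x)
    have hyx : d y = x * d (y / x) + (y / x) * d x := by
      have h2 := hleib x (y / x)
      have e2 : x * (y / x) = y := by field_simp
      rw [e2] at h2
      exact h2
    have expand : (1 + y / x) * d x = d x + (y / x) * d x := by ring
    rw [hper, expand] at key
    linarith
end

section
/- Let d : ℝ → ℝ satisfy the Leibniz rule d(xy) = x·d(y) + y·d(x) for all x, y ∈ ℝ, and let R ⊆ (0,1) be a set such that 1 ∉ (ℤ + R)·(ℤ + R), where ℤ + R := {n + r : n ∈ ℤ, r ∈ R} and the product of two sets A·B := {a·b : a ∈ A, b ∈ B}. Assume that d(u) = d(u+1) for all u ∈ ℝ \ (ℤ + R). Then d is additive, and hence d is a standard derivation. -/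
/-- If `d : ℝ → ℝ` satisfies the Leibniz rule, `R ⊆ (0,1)` with `1 ∉ (ℤ + R)·(ℤ + R)`, and
`d u = d (u + 1)` for all `u ∉ ℤ + R`, then `d` is additive, hence a standard derivation. -/
theorem additive_of_leibniz_of_R_prod_one
    (d : ℝ → ℝ) (hleib : ∀ x y : ℝ, d (x * y) = x * d y + y * d x)
    (R : Set ℝ) (hR : R ⊆ Set.Ioo 0 1)
    (hprod : ∀ a ∈ {x : ℝ | ∃ (n : ℤ) (r : ℝ), r ∈ R ∧ x = (n : ℝ) + r},
             ∀ b ∈ {x : ℝ | ∃ (n : ℤ) (r : ℝ), r ∈ R ∧ x = (n : ℝ) + r},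
             a * b ≠ 1)
    (hd : ∀ u : ℝ, (¬ ∃ (n : ℤ) (r : ℝ), r ∈ R ∧ u = (n : ℝ) + r) → d u = d (u + 1)) :
    ∀ x y : ℝ, d (x + y) = d x + d y := by
  have h0 : d 0 = 0 := by have := hleib 0 0; simpa using this
  have h1 : d 1 = 0 := by have := hleib 1 1; simp at this; linarith
  -- inverse formula
  have hinv : ∀ x : ℝ, x ≠ 0 → x ^ 2 * d x⁻¹ = - d x := by
    intro x hx
    have h := hleib x x⁻¹
    rw [mul_inv_cancel₀ hx, h1] at h
    have hxi : x * x⁻¹ = 1 := mul_inv_cancel₀ hx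
    linear_combination (-x) * h - d x * hxi
  -- periodicity
  have per : ∀ x : ℝ, d (x + 1) = d x := by
    intro x
    by_cases hmem : ∃ (n : ℤ) (r : ℝ), r ∈ R ∧ x = (n : ℝ) + r
    · -- x ∈ ℤ + R, so x⁻¹ ∉ ℤ + R
      have hx : x ≠ 0 := by
        rintro rfl
        obtain ⟨n, r, hr, hnr⟩ := hmem
        obtain ⟨hr0, hr1⟩ := hR hr
        have : (n : ℝ) = -r := by linarith
        have hn : (n : ℝ) < 0 := by rw [this]; linarith
        have hn' : (-1 : ℝ) < n := by rw [this]; linarith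
        have : (n : ℤ) < 0 := by exact_mod_cast hn
        have : (-1 : ℤ) < n := by exact_mod_cast hn'
        omega
      have hmem' : ¬ ∃ (n : ℤ) (r : ℝ), r ∈ R ∧ x⁻¹ = (n : ℝ) + r := by
        intro hmem'
        exact hprod x hmem x⁻¹ hmem' (mul_inv_cancel₀ hx)
      have hper : d x⁻¹ = d (x⁻¹ + 1) := hd x⁻¹ hmem'
      have key : (x + 1) * x⁻¹ = x⁻¹ + 1 := by field_simp; ring
      have h2 : d (x⁻¹ + 1) = (x + 1) * d x⁻¹ + x⁻¹ * d (x + 1) := by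
        rw [← key]; exact hleib (x + 1) x⁻¹
      have h3 := hinv x hx
      have hxi : x * x⁻¹ = 1 := mul_inv_cancel₀ hx
      have ha : x * d x⁻¹ + x⁻¹ * d (x + 1) = 0 := by linarith [hper.trans h2]
      linear_combination x * ha - h3 - d (x + 1) * hxi
    · exact (hd x hmem).symm
  -- additivity
  intro x y
  rcases eq_or_ne x 0 with rfl | hx
  · simp [h0]
  · have e1 : x * (y / x) = y := by field_simp
    have e2 : x * (y / x + 1) = x + y := by field_simp; ring
    have h2 := hleib x (y / x + 1)
    rw [e2, per (y / x)] at h2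
    have h3 := hleib x (y / x)
    rw [e1] at h3
    rw [h2, h3]; ring
end

section
/- Let d : ℝ → ℝ satisfy the Leibniz rule d(xy) = x·d(y) + y·d(x) for all x, y ∈ ℝ, and let R ⊆ (0,1) be a set such that −1 ∉ (ℤ + R)·(ℤ + R), where ℤ + R := {n + r : n ∈ ℤ, r ∈ R} and the product of two sets A·B := {a·b : a ∈ A, b ∈ B}. Assume that d(u) = d(u+1) for all u ∈ ℝ \ (ℤ + R). Then d is additive, and hence d is a standard derivation. -/
/-- If `d : ℝ → ℝ` satisfies the Leibniz rule, `R ⊆ (0,1)` with `-1 ∉ (ℤ + R)·(ℤ + R)`, and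
`d u = d (u + 1)` for all `u ∉ ℤ + R`, then `d` is additive, hence a standard derivation. -/
theorem additive_of_leibniz_of_R_prod_neg_one
    (d : ℝ → ℝ) (hleib : ∀ x y : ℝ, d (x * y) = x * d y + y * d x)
    (R : Set ℝ) (hR : R ⊆ Set.Ioo 0 1)
    (hprod : ∀ a ∈ {x : ℝ | ∃ (n : ℤ) (r : ℝ), r ∈ R ∧ x = (n : ℝ) + r},
             ∀ b ∈ {x : ℝ | ∃ (n : ℤ) (r : ℝ), r ∈ R ∧ x = (n : ℝ) + r},
             a * b ≠ -1)
    (hd : ∀ u : ℝ, (¬ ∃ (n : ℤ) (r : ℝ), r ∈ R ∧ u = (n : ℝ) + r) → d u = d (u + 1)) :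
    ∀ x y : ℝ, d (x + y) = d x + d y := by
  have h1 : d 1 = 0 := by have := hleib 1 1; norm_num at this; linarith
  have h0 : d 0 = 0 := by have := hleib 0 0; norm_num at this; linarith
  have hneg1 : d (-1) = 0 := by
    have := hleib (-1) (-1); norm_num at this; linarith
  have hneg : ∀ x : ℝ, d (-x) = - d x := by
    intro x
    have := hleib (-1) x
    rw [hneg1] at this
    have e : (-1 : ℝ) * x = -x := by ring
    rw [e] at this
    linarith
  have hinv : ∀ t : ℝ, t ≠ 0 → d t⁻¹ = - d t / t ^ 2 := by
    intro t ht
    have := hleib t t⁻¹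
    rw [mul_inv_cancel₀ ht, h1] at this
    have ht2 : (t : ℝ) ^ 2 ≠ 0 := pow_ne_zero 2 ht
    rw [eq_div_iff ht2]
    linear_combination (-t) * this - d t * mul_inv_cancel₀ ht
  have key : ∀ t : ℝ, d (t + 1) = d t := by
    intro t
    by_cases hS : ∃ (n : ℤ) (r : ℝ), r ∈ R ∧ t = (n : ℝ) + r
    · have ht0 : t ≠ 0 := by
        rintro rfl
        obtain ⟨n, r, hr, h⟩ := hS
        obtain ⟨hr0, hr1⟩ := hR hr
        have hn1 : (-1 : ℝ) < (n : ℝ) := by linarith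
        have hn2 : (n : ℝ) < 0 := by linarith
        have : (-1 : ℤ) < n := by exact_mod_cast hn1
        have : n < 0 := by exact_mod_cast hn2
        omega
      by_cases hS' : ∃ (n : ℤ) (r : ℝ), r ∈ R ∧ t⁻¹ = (n : ℝ) + r
      · -- then -t ∉ S, hence -t-1 ∉ S, use d(-t-1) = d(-t)
        have hnt : ¬ ∃ (n : ℤ) (r : ℝ), r ∈ R ∧ -t - 1 = (n : ℝ) + r := by
          rintro ⟨n, r, hr, h⟩
          refine hprod t⁻¹ hS' (-t) ⟨n + 1, r, hr, by push_cast; linarith⟩ ?_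
          field_simp
        have c := hd (-t - 1) hnt
        rw [show (-t - 1 + 1 : ℝ) = -t by ring] at c
        have a := hneg (t + 1)
        rw [show (-(t + 1) : ℝ) = -t - 1 by ring] at a
        have b := hneg t
        linarith
      · -- 1/t ∉ S : use d(1/t+1) = d(1/t) and Leibniz at t·(1/t+1) = t+1
        have h1t := hd t⁻¹ hS'
        have e := hleib t (t⁻¹ + 1)
        rw [mul_add, mul_inv_cancel₀ ht0, ← h1t, hinv t ht0] at e
        rw [show (1 + t * 1 : ℝ) = t + 1 by ring] at e
        rw [e]
        field_simp
        ring
    · exact (hd t hS).symm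
  intro x y
  rcases eq_or_ne y 0 with rfl | hy
  · simp [h0]
  · have e := hleib y (x / y + 1)
    rw [show y * (x / y + 1) = x + y by field_simp, key (x / y)] at e
    have hxy : d (x / y) = x * (- d y / y ^ 2) + y⁻¹ * d x := by
      rw [div_eq_mul_inv, hleib x y⁻¹, hinv y hy]
    rw [hxy] at e
    rw [e]
    field_simp
    ring
end

section
/- Let d : ℝ → ℝ satisfy the Leibniz rule d(xy) = x·d(y) + y·d(x) for all x, y ∈ ℝ, and let 0 ≤ r < 1 be a constant. Assume that d(u) = d(u+1) holds for all u ∈ ℝ \ (ℤ + r), where ℤ + r := {n + r : n ∈ ℤ}. Then d is additive, and hence d is a standard derivation. -/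
/-- If `d : ℝ → ℝ` satisfies the Leibniz rule, `0 ≤ r < 1`, and `d u = d (u + 1)` for all
`u ∉ ℤ + r`, then `d` is additive, hence a standard derivation. -/
theorem additive_of_leibniz_of_single_residue
    (d : ℝ → ℝ) (hleib : ∀ x y : ℝ, d (x * y) = x * d y + y * d x)
    (r : ℝ) (hr0 : 0 ≤ r) (hr1 : r < 1)
    (hd : ∀ u : ℝ, (¬ ∃ n : ℤ, u = (n : ℝ) + r) → d u = d (u + 1)) :
    ∀ x y : ℝ, d (x + y) = d x + d y := by
  have d0 : d 0 = 0 := by have := hleib 0 0; simpa using this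
  have d1 : d 1 = 0 := by have := hleib 1 1; simp at this; linarith
  have dm1 : d (-1) = 0 := by
    have := hleib (-1) (-1); simp at this; linarith [d1]
  -- Lemma A: additivity when the ratio avoids the bad residue class
  have lemA : ∀ a b : ℝ, a ≠ 0 → (¬ ∃ n : ℤ, b / a = (n : ℝ) + r) →
      d (a + b) = d a + d b := by
    intro a b ha hb
    have h1 : d (b / a) = d (b / a + 1) := hd _ hb
    have h2 := hleib a (b / a + 1)
    have h3 := hleib a (b / a)
    have hab : a * (b / a) = b := by field_simp
    have hab1 : a * (b / a + 1) = a + b := by field_simp; ring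
    rw [hab1, ← h1] at h2
    rw [hab] at h3
    rw [h2, h3]; ring
  -- full periodicity
  have per : ∀ u : ℝ, d u = d (u + 1) := by
    intro u
    by_cases hu : ∃ n : ℤ, u = (n : ℝ) + r
    · by_cases hu0 : u = 0
      · norm_num [hu0, d0, d1]
      by_cases hu1 : u = -1
      · norm_num [hu1, d0, dm1]
      · -- choose a generic `a` avoiding a countable bad set
        obtain ⟨a, ha⟩ : ∃ a : ℝ, a ∉
            (({0} : Set ℝ) ∪ Set.range (fun n : ℤ => (u + 1) / ((n : ℝ) + r + 1))
              ∪ Set.range (fun n : ℤ => u / ((n : ℝ) + r + 1))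
              ∪ Set.range (fun n : ℤ => u - ((n : ℝ) + r))) := by
          by_contra h
          push_neg at h
          have hc : (({0} : Set ℝ) ∪ Set.range (fun n : ℤ => (u + 1) / ((n : ℝ) + r + 1))
              ∪ Set.range (fun n : ℤ => u / ((n : ℝ) + r + 1))
              ∪ Set.range (fun n : ℤ => u - ((n : ℝ) + r))).Countable := by
            exact (((Set.countable_singleton 0).union (Set.countable_range _)).union
              (Set.countable_range _)).union (Set.countable_range _)
          exact Cardinal.not_countable_real (hc.mono (fun x _ => h x))
        have ha0 : a ≠ 0 := by
          intro h0; exact ha (by simp [h0])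
        have h2 : ¬ ∃ n : ℤ, (u + 1 - a) / a = (n : ℝ) + r := by
          rintro ⟨n, hn⟩
          have hn' : u + 1 - a = ((n : ℝ) + r) * a := by
            field_simp at hn; linarith [hn]
          by_cases hz : (n : ℝ) + r + 1 = 0
          · apply hu1
            have hm : (n : ℝ) + r = -1 := by linarith
            rw [hm] at hn'; linarith
          · apply ha
            have : a = (u + 1) / ((n : ℝ) + r + 1) := by
              field_simp; nlinarith [hn']
            exact Or.inl (Or.inl (Or.inr ⟨n, this.symm⟩))
        have h3 : ¬ ∃ n : ℤ, (u - a) / a = (n : ℝ) + r := by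
          rintro ⟨n, hn⟩
          have hn' : u - a = ((n : ℝ) + r) * a := by
            field_simp at hn; linarith [hn]
          by_cases hz : (n : ℝ) + r + 1 = 0
          · apply hu0
            have hm : (n : ℝ) + r = -1 := by linarith
            rw [hm] at hn'; nlinarith [hn']
          · apply ha
            have : a = u / ((n : ℝ) + r + 1) := by
              field_simp; nlinarith [hn']
            exact Or.inl (Or.inr ⟨n, this.symm⟩)
        have h4 : ¬ ∃ n : ℤ, u - a = (n : ℝ) + r := by
          rintro ⟨n, hn⟩
          apply ha
          exact Or.inr ⟨n, show u - ((n:ℝ)+r) = a by linarith⟩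
        have e1 : d (a + (u + 1 - a)) = d a + d (u + 1 - a) := lemA a (u + 1 - a) ha0 h2
        have e2 : d (a + (u - a)) = d a + d (u - a) := lemA a (u - a) ha0 h3
        have e3 : d (u - a) = d ((u - a) + 1) := hd _ h4
        have r1 : a + (u + 1 - a) = u + 1 := by ring
        have r2 : a + (u - a) = u := by ring
        have r3 : (u - a) + 1 = u + 1 - a := by ring
        rw [r1] at e1; rw [r2] at e2; rw [r3] at e3
        linarith
    · exact hd u hu
  -- conclude additivity
  intro x y
  by_cases hx : x = 0
  · simp [hx, d0]
  · have h1 := per (y / x)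
    have h2 := hleib x (y / x + 1)
    have h3 := hleib x (y / x)
    have hab : x * (y / x) = y := by field_simp
    have hab1 : x * (y / x + 1) = x + y := by field_simp; ring
    rw [hab1, ← h1] at h2
    rw [hab] at h3
    rw [h2, h3]; ring
end

section
/- Let d : ℝ → ℝ satisfy the Leibniz rule d(xy) = x·d(y) + y·d(x) for all x, y ∈ ℝ, and let I be one of the six intervals (−∞, −2], [−2, −1), (−1, −1/2], [−1/2, 0), (0, 1], [1, ∞). Assume that d(u) = d(u+1) holds for all u ∈ I. Then d is additive, and hence d is a standard derivation. -/
/-- The shift-difference of `d`. -/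
private def Fd (d : ℝ → ℝ) (x : ℝ) : ℝ := d (x + 1) - d x

private lemma leib_one {d : ℝ → ℝ} (hleib : ∀ x y : ℝ, d (x * y) = x * d y + y * d x) :
    d 1 = 0 := by have := hleib 1 1; simp at this; linarith

private lemma leib_zero {d : ℝ → ℝ} (hleib : ∀ x y : ℝ, d (x * y) = x * d y + y * d x) :
    d 0 = 0 := by have := hleib 0 0; simp at this; linarith

private lemma leib_negone {d : ℝ → ℝ} (hleib : ∀ x y : ℝ, d (x * y) = x * d y + y * d x) :
    d (-1) = 0 := by
  have h := hleib (-1) (-1)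
  have h1 := leib_one hleib
  norm_num at h
  linarith

private lemma leib_neg {d : ℝ → ℝ} (hleib : ∀ x y : ℝ, d (x * y) = x * d y + y * d x)
    (x : ℝ) : d (-x) = -d x := by
  have h := hleib (-1) x
  have h1 := leib_negone hleib
  rw [h1] at h
  norm_num at h
  linarith

private lemma leib_inv {d : ℝ → ℝ} (hleib : ∀ x y : ℝ, d (x * y) = x * d y + y * d x)
    {x : ℝ} (hx : x ≠ 0) : x ^ 2 * d x⁻¹ = -d x := by
  have h := hleib x x⁻¹
  rw [mul_inv_cancel₀ hx, leib_one hleib] at h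
  have hx2 : x * x⁻¹ = 1 := mul_inv_cancel₀ hx
  linear_combination (-x) * h - d x * hx2

private lemma Fd_sym {d : ℝ → ℝ} (hleib : ∀ x y : ℝ, d (x * y) = x * d y + y * d x)
    (x : ℝ) : Fd d (-1 - x) = Fd d x := by
  unfold Fd
  have e1 : -1 - x + 1 = -x := by ring
  have e2 : -1 - x = -(x + 1) := by ring
  rw [e1, e2, leib_neg hleib, leib_neg hleib]
  ring

private lemma Fd_inv {d : ℝ → ℝ} (hleib : ∀ x y : ℝ, d (x * y) = x * d y + y * d x)
    {x : ℝ} (hx : x ≠ 0) : Fd d x = x * Fd d x⁻¹ := by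
  unfold Fd
  have e1 : x⁻¹ + 1 = (x + 1) * x⁻¹ := by field_simp; ring
  rw [e1, hleib (x + 1) x⁻¹]
  have h2 := leib_inv hleib hx
  have hx2 : x * x⁻¹ = 1 := mul_inv_cancel₀ hx
  linear_combination (-1) * h2 - d (x + 1) * hx2

/-- If `d : ℝ → ℝ` satisfies the Leibniz rule, `I` is one of the six intervals
`(-∞,-2]`, `[-2,-1)`, `(-1,-1/2]`, `[-1/2,0)`, `(0,1]`, `[1,∞)`, and `d u = d (u + 1)`
for all `u ∈ I`, then `d` is additive, hence a standard derivation. -/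
theorem additive_of_leibniz_of_interval
    (d : ℝ → ℝ) (hleib : ∀ x y : ℝ, d (x * y) = x * d y + y * d x)
    (I : Set ℝ)
    (hI : I = Set.Iic (-2 : ℝ) ∨ I = Set.Ico (-2 : ℝ) (-1) ∨
          I = Set.Ioc (-1 : ℝ) (-(1/2)) ∨ I = Set.Ico (-(1/2) : ℝ) 0 ∨
          I = Set.Ioc (0 : ℝ) 1 ∨ I = Set.Ici (1 : ℝ))
    (hd : ∀ u ∈ I, d u = d (u + 1)) :
    ∀ x y : ℝ, d (x + y) = d x + d y := by
  have hdF : ∀ u ∈ I, Fd d u = 0 := by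
    intro u hu; unfold Fd; rw [← hd u hu]; ring
  have hsym := Fd_sym hleib
  -- F vanishes on (0, 1]
  have hI0 : ∀ u : ℝ, 0 < u → u ≤ 1 → Fd d u = 0 := by
    intro u hu0 hu1
    have hune : u ≠ 0 := ne_of_gt hu0
    have huinv : u * u⁻¹ = 1 := mul_inv_cancel₀ hune
    have hinv1 : (1 : ℝ) ≤ u⁻¹ := by nlinarith
    rcases hI with h | h | h | h | h | h
    · -- I = Iic (-2)
      have hmem : (-1 - u⁻¹) ∈ I := by rw [h]; simp [Set.mem_Iic]; linarith
      rw [Fd_inv hleib hune, ← hsym u⁻¹, hdF _ hmem, mul_zero]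
    · -- I = Ico (-2) (-1)
      have hmem : (-1 - u) ∈ I := by
        rw [h]; constructor <;> simp <;> linarith
      rw [← hsym u, hdF _ hmem]
    · -- I = Ioc (-1) (-(1/2))
      have hvne : (-1 - u) ≠ 0 := by linarith
      have hvinv : (-1 - u) * (-1 - u)⁻¹ = 1 := mul_inv_cancel₀ hvne
      have hmem : (-1 - u)⁻¹ ∈ I := by
        rw [h]; constructor
        · nlinarith
        · nlinarith
      rw [← hsym u, Fd_inv hleib hvne, hdF _ hmem, mul_zero]
    · -- I = Ico (-(1/2)) 0
      have hvne : (-1 - u) ≠ 0 := by linarith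
      have hvinv : (-1 - u) * (-1 - u)⁻¹ = 1 := mul_inv_cancel₀ hvne
      have hwlt : (-1 - u)⁻¹ < 0 := by nlinarith
      have hwge : -1 < (-1 - u)⁻¹ := by nlinarith
      have hwle : (-1 - u)⁻¹ ≤ -(1/2) := by nlinarith
      have hmem : (-1 - (-1 - u)⁻¹) ∈ I := by
        rw [h]; constructor
        · simp; linarith
        · simp; linarith
      rw [← hsym u, Fd_inv hleib hvne, ← hsym ((-1 - u)⁻¹), hdF _ hmem, mul_zero]
    · -- I = Ioc 0 1
      exact hdF u (by rw [h]; exact ⟨hu0, hu1⟩)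
    · -- I = Ici 1
      have hmem : u⁻¹ ∈ I := by rw [h]; exact hinv1
      rw [Fd_inv hleib hune, hdF _ hmem, mul_zero]
  -- F vanishes on (0, ∞)
  have hpos : ∀ x : ℝ, 0 < x → Fd d x = 0 := by
    intro x hx
    rcases le_or_gt x 1 with hx1 | hx1
    · exact hI0 x hx hx1
    · have hxne : x ≠ 0 := ne_of_gt hx
      have hxinv : x * x⁻¹ = 1 := mul_inv_cancel₀ hxne
      have h1 : 0 < x⁻¹ := inv_pos.mpr hx
      have h2 : x⁻¹ ≤ 1 := by nlinarith
      rw [Fd_inv hleib hxne, hI0 x⁻¹ h1 h2, mul_zero]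
  -- F vanishes everywhere
  have hall : ∀ x : ℝ, Fd d x = 0 := by
    intro x
    rcases lt_trichotomy x 0 with hx | hx | hx
    · rcases lt_trichotomy x (-1) with hx1 | hx1 | hx1
      · rw [← hsym x]
        exact hpos _ (by linarith)
      · subst hx1
        unfold Fd
        norm_num [leib_zero hleib, leib_negone hleib]
      · -- -1 < x < 0
        have hxne : x ≠ 0 := ne_of_lt hx
        have hxinv : x * x⁻¹ = 1 := mul_inv_cancel₀ hxne
        have h1 : x⁻¹ < -1 := by nlinarith
        have h2 : (0:ℝ) < -1 - x⁻¹ := by linarith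
        rw [Fd_inv hleib hxne, ← hsym x⁻¹, hpos _ h2, mul_zero]
    · subst hx
      unfold Fd
      norm_num [leib_zero hleib, leib_one hleib]
    · exact hpos x hx
  have hshift : ∀ x : ℝ, d (x + 1) = d x := by
    intro x
    have := hall x
    unfold Fd at this
    linarith
  intro x y
  rcases eq_or_ne y 0 with hy | hy
  · subst hy; rw [leib_zero hleib]; ring_nf
  · have e2 : d x = y * d (x / y) + x / y * d y := by
      have e : x = y * (x / y) := by field_simp
      calc d x = d (y * (x / y)) := by rw [← e]
        _ = y * d (x / y) + x / y * d y := hleib y (x / y)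
    have e1 : d (x + y) = y * d (x / y) + (x / y + 1) * d y := by
      have e : x + y = y * (x / y + 1) := by field_simp
      rw [e, hleib y (x / y + 1), hshift (x / y)]
    linear_combination e1 - e2
end

section
/- Let d : ℝ → ℝ satisfy the Leibniz rule d(xy) = x·d(y) + y·d(x) for all x, y ∈ ℝ. Then the following four statements are equivalent: (i) d(sin x) = cos(x)·d(x) for all x ∈ ℝ; (ii) d(cos x) = −sin(x)·d(x) for all x ∈ ℝ; (iii) d(tan x) = d(x)/cos²(x) for all x ∈ ℝ \ (πℤ + π/2); (iv) d(cot x) = −d(x)/sin²(x) for all x ∈ ℝ \ πℤ, where cot x = cos x / sin x. -/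
open Real

section Aux
variable (d : ℝ → ℝ)

lemma aux_d0 (hleib : ∀ x y : ℝ, d (x * y) = x * d y + y * d x) : d 0 = 0 := by
  have := hleib 0 0; simpa using this

lemma aux_d1 (hleib : ∀ x y : ℝ, d (x * y) = x * d y + y * d x) : d 1 = 0 := by
  have := hleib 1 1; simp at this; linarith

lemma aux_dneg1 (hleib : ∀ x y : ℝ, d (x * y) = x * d y + y * d x) : d (-1) = 0 := by
  have h := hleib (-1) (-1)
  have h1 := aux_d1 d hleib
  simp at h; linarith

lemma aux_dneg (hleib : ∀ x y : ℝ, d (x * y) = x * d y + y * d x) (x : ℝ) :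
    d (-x) = - d x := by
  have h := hleib (-1) x
  have h1 := aux_dneg1 d hleib
  simp [h1] at h; linarith [h]

lemma aux_additive_of_shift (hleib : ∀ x y : ℝ, d (x * y) = x * d y + y * d x)
    (c : ℝ) (hc : c ≠ 0) (hsh : ∀ y, d (y + c) = d y) :
    ∀ a b : ℝ, d (a + b) = d a + d b := by
  have h0 : d 0 = 0 := aux_d0 d hleib
  have hdc : d c = 0 := by have := hsh 0; rwa [zero_add, h0] at this
  have key : ∀ l : ℝ, l ≠ 0 → ∀ y, d (y + l * c) = d y + d (l * c) := by
    intro l hl y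
    have h1 : d (l * (y / l + c)) = l * d (y / l + c) + (y / l + c) * d l := hleib _ _
    have h2 : d (y / l + c) = d (y / l) := hsh _
    have h3 : d (l * (y / l)) = l * d (y / l) + (y / l) * d l := hleib _ _
    have h4 : l * (y / l) = y := by field_simp
    have h5 : l * (y / l + c) = y + l * c := by rw [mul_add, h4]
    have h6 : d (l * c) = l * d c + c * d l := hleib _ _
    rw [h4] at h3
    rw [h5, h2] at h1
    rw [h1, h3, h6, hdc]; ring
  intro a b
  by_cases hb : b = 0
  · simp [hb, h0]
  · have hl : b / c ≠ 0 := div_ne_zero hb hc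
    have := key (b / c) hl a
    rwa [div_mul_cancel₀ b hc] at this

lemma aux_d_int (hleib : ∀ x y : ℝ, d (x * y) = x * d y + y * d x)
    (h2 : d 2 = 0) (hodd : ∀ k : ℤ, d (2 * (k : ℝ) + 1) = 0) :
    ∀ k : ℤ, d (k : ℝ) = 0 := by
  have h0 : d 0 = 0 := aux_d0 d hleib
  have hneg := aux_dneg d hleib
  have hnat : ∀ n : ℕ, d (n : ℝ) = 0 := by
    intro n
    induction n using Nat.strong_induction_on with
    | _ n ih =>
      rcases Nat.even_or_odd n with ⟨m, hm⟩ | ⟨m, hm⟩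
      · rcases Nat.eq_zero_or_pos m with rfl | hmpos
        · have : n = 0 := by omega
          simpa [this] using h0
        · have hlt : m < n := by omega
          have h := hleib 2 (m : ℝ)
          have hn : (n : ℝ) = 2 * (m : ℝ) := by push_cast [hm]; ring
          rw [hn, h, ih m hlt, h2]; ring
      · have hn : (n : ℝ) = 2 * ((m : ℤ) : ℝ) + 1 := by push_cast [hm]; ring
        rw [hn]; exact hodd m
  intro k
  rcases le_or_gt 0 k with hk | hk
  · lift k to ℕ using hk; exact hnat k
  · have hk' : (0 : ℤ) ≤ -k := by omega
    have h := hnat (-k).toNat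
    have hcast : (((-k).toNat : ℕ) : ℝ) = -(k : ℝ) := by
      exact_mod_cast congrArg (Int.cast : ℤ → ℝ) (Int.toNat_of_nonneg hk')
    rw [hcast] at h
    have := hneg (k : ℝ)
    rw [h] at this
    linarith

end Aux

section Aux2
variable (d : ℝ → ℝ)

lemma aux_d2_of_shift (hleib : ∀ x y : ℝ, d (x * y) = x * d y + y * d x)
    (hsh0 : ∀ x, Real.sin x ≠ 0 → Real.cos x ≠ 0 → d (x + π) = d x) : d 2 = 0 := by
  have hs3 : sin (π/3) ≠ 0 := by rw [sin_pi_div_three]; positivity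
  have hc3 : cos (π/3) ≠ 0 := by rw [cos_pi_div_three]; norm_num
  have hs6 : sin (2*(π/3)) ≠ 0 := by
    rw [sin_two_mul]; exact mul_ne_zero (mul_ne_zero two_ne_zero hs3) hc3
  have hc6 : cos (2*(π/3)) ≠ 0 := by rw [cos_two_mul, cos_pi_div_three]; norm_num
  have hs6' : sin (2*(π/3) + π) ≠ 0 := by rw [sin_add_pi]; simpa using hs6
  have hc6' : cos (2*(π/3) + π) ≠ 0 := by rw [cos_add_pi]; simpa using hc6
  have e1 : d (2 * (π/3 + π)) = 2 * d (π/3 + π) + (π/3 + π) * d 2 := hleib _ _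
  have e1' : d (π/3 + π) = d (π/3) := hsh0 _ hs3 hc3
  have harg : 2 * (π/3 + π) = (2*(π/3) + π) + π := by ring
  have e2 : d ((2*(π/3) + π) + π) = d (2*(π/3) + π) := hsh0 _ hs6' hc6'
  have e3 : d (2*(π/3) + π) = d (2*(π/3)) := hsh0 _ hs6 hc6
  have e4 : d (2*(π/3)) = 2 * d (π/3) + (π/3) * d 2 := hleib _ _
  rw [harg, e2, e3, e4, e1'] at e1
  have hz : π * d 2 = 0 := by linarith
  rcases mul_eq_zero.mp hz with h | h
  · exact absurd h pi_ne_zero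
  · exact h

lemma aux_hc_to_hs (hleib : ∀ x y : ℝ, d (x * y) = x * d y + y * d x)
    (hc : ∀ x : ℝ, d (Real.cos x) = -Real.sin x * d x) :
    ∀ x : ℝ, d (Real.sin x) = Real.cos x * d x := by
  have h0 : d 0 = 0 := aux_d0 d hleib
  have h1 : d 1 = 0 := aux_d1 d hleib
  have hneg := aux_dneg d hleib
  have hpole : ∀ k : ℤ, d (π/2 + k*π) = 0 := by
    intro k
    have hcos : cos (π/2 + k*π) = 0 := by
      rw [Real.cos_eq_zero_iff]; exact ⟨k, by ring⟩
    have hsin2 : sin (π/2 + k*π)^2 = 1 := by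
      have := sin_sq_add_cos_sq (π/2 + k*π); rw [hcos] at this; nlinarith
    have hsne : sin (π/2 + k*π) ≠ 0 := by
      intro h'; rw [h'] at hsin2; norm_num at hsin2
    have h := hc (π/2 + k*π)
    rw [hcos, h0] at h
    have h' : -sin (π/2 + k*π) * d (π/2 + k*π) = 0 := h.symm
    rcases mul_eq_zero.mp h' with h'' | h''
    · exact absurd (neg_eq_zero.mp h'') hsne
    · exact h''
  have hsh0 : ∀ x, sin x ≠ 0 → cos x ≠ 0 → d (x + π) = d x := by
    intro x hsx _
    have h1' := hc (x + π)
    rw [cos_add_pi, sin_add_pi, hneg, hc x] at h1'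
    have h2' : sin x * d x = sin x * d (x + π) := by linear_combination h1'
    exact (mul_left_cancel₀ hsx h2').symm
  have hd2 : d 2 = 0 := aux_d2_of_shift d hleib hsh0
  have hdpi2 : d (π/2) = 0 := by
    have := hpole 0; norm_num at this; exact this
  have hodd : ∀ k : ℤ, d (2*(k:ℝ)+1) = 0 := by
    intro k
    have h := hleib (2*(k:ℝ)+1) (π/2)
    have harg : (2*(k:ℝ)+1) * (π/2) = π/2 + (k:ℝ)*π := by push_cast; ring
    rw [harg, hpole k, hdpi2] at h
    have hz : (π/2) * d (2*(k:ℝ)+1) = 0 := by linarith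
    rcases mul_eq_zero.mp hz with h' | h'
    · exact absurd h' (by positivity)
    · exact h'
  have hint := aux_d_int d hleib hd2 hodd
  have hdpi : d π = 0 := by
    have h := hleib 2 (π/2)
    rw [show (2:ℝ) * (π/2) = π by ring, hdpi2, hd2] at h
    linarith
  have hkpi : ∀ k : ℤ, d ((k:ℝ) * π) = 0 := by
    intro k
    have h := hleib (k:ℝ) π
    rw [hdpi, hint k] at h; simpa using h
  have hsh : ∀ y, d (y + π) = d y := by
    intro y
    by_cases hsy : sin y = 0
    · obtain ⟨n, hn⟩ := Real.sin_eq_zero_iff.mp hsy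
      have ha : d y = 0 := by rw [← hn]; exact hkpi n
      have hb : d (y + π) = 0 := by
        rw [show y + π = ((n+1 : ℤ):ℝ) * π by push_cast [← hn]; ring]
        exact hkpi (n+1)
      rw [ha, hb]
    · by_cases hcy : cos y = 0
      · obtain ⟨k, hk⟩ := Real.cos_eq_zero_iff.mp hcy
        have ha : d y = 0 := by
          rw [hk, show (2*(k:ℝ)+1) * π/2 = π/2 + (k:ℝ)*π by ring]; exact hpole k
        have hb : d (y + π) = 0 := by
          rw [hk, show (2*(k:ℝ)+1) * π/2 + π = π/2 + ((k+1:ℤ):ℝ)*π by push_cast; ring]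
          exact hpole (k+1)
        rw [ha, hb]
      · exact hsh0 y hsy hcy
  have hadd := aux_additive_of_shift d hleib π pi_ne_zero hsh
  intro x
  by_cases hsx : sin x = 0
  · obtain ⟨n, hn⟩ := Real.sin_eq_zero_iff.mp hsx
    have ha : d x = 0 := by rw [← hn]; exact hkpi n
    rw [hsx, ha, h0]; ring
  · have e1 : d (sin x * sin x + cos x * cos x) = d (sin x * sin x) + d (cos x * cos x) :=
      hadd _ _
    rw [show sin x * sin x + cos x * cos x = 1 by
      linear_combination sin_sq_add_cos_sq x, h1] at e1
    have e3 := hleib (sin x) (sin x)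
    have e4 := hleib (cos x) (cos x)
    have e5 := hc x
    have key : sin x * (d (sin x) - cos x * d x) = 0 := by
      linear_combination (-(1:ℝ)/2)*e1 - (1/2)*e3 - (1/2)*e4 - cos x * e5
    rcases mul_eq_zero.mp key with h' | h'
    · exact absurd h' hsx
    · linarith

end Aux2

section Aux3
variable (d : ℝ → ℝ)

lemma aux_hs_to_hc (hleib : ∀ x y : ℝ, d (x * y) = x * d y + y * d x)
    (hs : ∀ x : ℝ, d (Real.sin x) = Real.cos x * d x) :
    ∀ x : ℝ, d (Real.cos x) = -Real.sin x * d x := by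
  have h0 : d 0 = 0 := aux_d0 d hleib
  have h1 : d 1 = 0 := aux_d1 d hleib
  have hneg1 : d (-1) = 0 := aux_dneg1 d hleib
  have hdpi : d π = 0 := by
    have h := hs π
    rw [Real.sin_pi, Real.cos_pi, h0] at h
    linarith
  have hd2pi : d (2*π) = 0 := by
    have h := hs (2*π)
    rw [Real.sin_two_pi, Real.cos_two_pi, h0] at h
    linarith
  have hd2 : d 2 = 0 := by
    have h := hleib 2 π
    rw [hd2pi, hdpi] at h
    have hz : π * d 2 = 0 := by linarith
    rcases mul_eq_zero.mp hz with h' | h'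
    · exact absurd h' pi_ne_zero
    · exact h'
  intro x
  by_cases hsx : sin x = 0
  · rcases Real.sin_eq_zero_iff_cos_eq.mp hsx with h' | h'
    · rw [h', hsx, h1]; ring
    · rw [h', hsx, hneg1]; ring
  · have e1 := hs (2*x)
    have e2 : d (2*x) = 2 * d x + x * d 2 := hleib 2 x
    rw [hd2, mul_zero, add_zero] at e2
    rw [show sin (2*x) = 2 * (sin x * cos x) by rw [sin_two_mul]; ring] at e1
    have e4 : d (2 * (sin x * cos x)) = 2 * d (sin x * cos x) + (sin x * cos x) * d 2 :=
      hleib _ _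
    rw [hd2, mul_zero, add_zero] at e4
    have e5 : d (sin x * cos x) = sin x * d (cos x) + cos x * d (sin x) := hleib _ _
    rw [e4, e2, e5, hs x] at e1
    have e7 : cos (2*x) = 2 * cos x ^2 - 1 := cos_two_mul x
    have epyth := sin_sq_add_cos_sq x
    have key : sin x * (d (cos x) + sin x * d x) = 0 := by
      linear_combination (1/2:ℝ)*e1 + d x * e7 + d x * epyth
    rcases mul_eq_zero.mp key with h' | h'
    · exact absurd h' hsx
    · linarith

lemma aux_hs_to_ht (hleib : ∀ x y : ℝ, d (x * y) = x * d y + y * d x)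
    (hs : ∀ x : ℝ, d (Real.sin x) = Real.cos x * d x) :
    ∀ x : ℝ, Real.cos x ≠ 0 → d (Real.tan x) = d x / (Real.cos x)^2 := by
  have hc := aux_hs_to_hc d hleib hs
  intro x hcx
  have h := hleib (tan x) (cos x)
  rw [Real.tan_mul_cos hcx, hs x, hc x] at h
  have h2 : tan x * cos x = sin x := Real.tan_mul_cos hcx
  have epyth := sin_sq_add_cos_sq x
  have hgoal : d (tan x) * cos x ^ 2 = d x := by
    linear_combination -(cos x) * h + (sin x * d x) * h2 + d x * epyth
  rw [eq_div_iff (pow_ne_zero 2 hcx)]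
  exact hgoal

lemma aux_hs_to_hk (hleib : ∀ x y : ℝ, d (x * y) = x * d y + y * d x)
    (hs : ∀ x : ℝ, d (Real.sin x) = Real.cos x * d x) :
    ∀ x : ℝ, Real.sin x ≠ 0 → d (Real.cos x / Real.sin x) = -(d x / (Real.sin x)^2) := by
  have hc := aux_hs_to_hc d hleib hs
  intro x hsx
  have h := hleib (cos x / sin x) (sin x)
  rw [div_mul_cancel₀ _ hsx, hs x, hc x] at h
  have epyth := sin_sq_add_cos_sq x
  field_simp at h
  have hgoal : d (cos x / sin x) * sin x ^ 2 = -d x := by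
    linear_combination -h - d x * epyth
  have : d (cos x / sin x) = -d x / sin x ^ 2 := by
    rw [eq_div_iff (pow_ne_zero 2 hsx)]; exact hgoal
  rw [this]; ring

end Aux3

section Aux4
variable (d : ℝ → ℝ)

lemma aux_ht_to_hs (hleib : ∀ x y : ℝ, d (x * y) = x * d y + y * d x)
    (ht : ∀ x : ℝ, Real.cos x ≠ 0 → d (Real.tan x) = d x / (Real.cos x)^2) :
    ∀ x : ℝ, d (Real.sin x) = Real.cos x * d x := by
  have h0 : d 0 = 0 := aux_d0 d hleib
  have h1 : d 1 = 0 := aux_d1 d hleib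
  have hneg1 : d (-1) = 0 := aux_dneg1 d hleib
  have hneg := aux_dneg d hleib
  have hcosne : ∀ k : ℤ, cos ((k:ℝ)*π) ≠ 0 := by
    intro k
    have hs' : sin ((k:ℝ)*π) = 0 := by exact_mod_cast Real.sin_int_mul_pi k
    have := sin_sq_add_cos_sq ((k:ℝ)*π)
    intro h'; rw [h', hs'] at this; norm_num at this
  have hkpi : ∀ k : ℤ, d ((k:ℝ)*π) = 0 := by
    intro k
    have h := ht ((k:ℝ)*π) (hcosne k)
    have htan : tan ((k:ℝ)*π) = 0 := by exact_mod_cast Real.tan_int_mul_pi k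
    rw [htan, h0] at h
    rcases div_eq_zero_iff.mp h.symm with h' | h'
    · exact h'
    · exact absurd h' (pow_ne_zero 2 (hcosne k))
  have hcq : ∀ m : ℤ, cos (π/4 + (m:ℝ)*π) ≠ 0 := by
    intro m
    rw [Real.cos_add_int_mul_pi, Real.cos_pi_div_four]
    refine mul_ne_zero (by positivity) (by positivity)
  have hquarter : ∀ m : ℤ, d (π/4 + (m:ℝ)*π) = 0 := by
    intro m
    have h := ht (π/4 + (m:ℝ)*π) (hcq m)
    have htan : tan (π/4 + (m:ℝ)*π) = 1 := by
      rw [Real.tan_add_int_mul_pi, Real.tan_pi_div_four]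
    rw [htan, h1] at h
    rcases div_eq_zero_iff.mp h.symm with h' | h'
    · exact h'
    · exact absurd h' (pow_ne_zero 2 (hcq m))
  have hd4 : d (π/4) = 0 := by
    have := hquarter 0; norm_num at this; exact this
  have h4m : ∀ m : ℤ, d (4*(m:ℝ)+1) = 0 := by
    intro m
    have h := hleib (4*(m:ℝ)+1) (π/4)
    rw [show (4*(m:ℝ)+1) * (π/4) = π/4 + (m:ℝ)*π by ring, hquarter m, hd4] at h
    have hz : (π/4) * d (4*(m:ℝ)+1) = 0 := by linarith
    rcases mul_eq_zero.mp hz with h' | h'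
    · exact absurd h' (by positivity)
    · exact h'
  have hodd : ∀ k : ℤ, d (2*(k:ℝ)+1) = 0 := by
    intro k
    rcases Int.even_or_odd k with ⟨m, hm⟩ | ⟨m, hm⟩
    · rw [show 2*(k:ℝ)+1 = 4*(m:ℝ)+1 by
        have : (k:ℝ) = (m:ℝ) + (m:ℝ) := by exact_mod_cast congrArg (Int.cast : ℤ → ℝ) hm
        rw [this]; ring]
      exact h4m m
    · rw [show 2*(k:ℝ)+1 = -(4*((-m-1:ℤ):ℝ)+1) by
        have : (k:ℝ) = 2*(m:ℝ) + 1 := by exact_mod_cast congrArg (Int.cast : ℤ → ℝ) hm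
        push_cast; rw [this]; ring]
      rw [hneg, h4m (-m-1)]; ring
  have hshc : ∀ x, cos x ≠ 0 → d (x + π) = d x := by
    intro x hcx
    have hcx' : cos (x + π) ≠ 0 := by rw [cos_add_pi]; simpa using hcx
    have h2 := ht (x + π) hcx'
    rw [Real.tan_add_pi, cos_add_pi, neg_sq] at h2
    have h3 : d x / cos x ^ 2 = d (x + π) / cos x ^ 2 := by rw [← ht x hcx, h2]
    field_simp at h3
    linarith
  have hd2 : d 2 = 0 := aux_d2_of_shift d hleib (fun x _ hc => hshc x hc)
  have hdpi2 : d (π/2) = 0 := by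
    have h := hleib 2 (π/4)
    rw [show (2:ℝ) * (π/4) = π/2 by ring, hd4, hd2] at h
    linarith
  have hpole : ∀ k : ℤ, d ((2*(k:ℝ)+1) * (π/2)) = 0 := by
    intro k
    have h := hleib (2*(k:ℝ)+1) (π/2)
    rw [hdpi2, hodd k] at h
    simpa using h
  have hsh : ∀ y, d (y + π) = d y := by
    intro y
    by_cases hcy : cos y = 0
    · obtain ⟨k, hk⟩ := Real.cos_eq_zero_iff.mp hcy
      have ha : d y = 0 := by
        rw [hk, show (2*(k:ℝ)+1) * π/2 = (2*(k:ℝ)+1) * (π/2) by ring]; exact hpole k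
      have hb : d (y + π) = 0 := by
        rw [hk, show (2*(k:ℝ)+1) * π/2 + π = (2*((k+1:ℤ):ℝ)+1) * (π/2) by push_cast; ring]
        exact hpole (k+1)
      rw [ha, hb]
    · exact hshc y hcy
  have hadd := aux_additive_of_shift d hleib π pi_ne_zero hsh
  intro x
  by_cases hcx : cos x = 0
  · have hs2 : sin x ^ 2 = 1 := by
      have := sin_sq_add_cos_sq x; rw [hcx] at this; nlinarith
    have hsd : d (sin x) = 0 := by
      rcases mul_eq_zero.mp (show (sin x - 1) * (sin x + 1) = 0 by nlinarith) with h' | h'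
      · rw [show sin x = 1 by linarith]; exact h1
      · rw [show sin x = -1 by linarith]; exact hneg1
    rw [hsd, hcx]; ring
  · have e1 : d (sin x * sin x + cos x * cos x) = d (sin x * sin x) + d (cos x * cos x) :=
      hadd _ _
    rw [show sin x * sin x + cos x * cos x = 1 by
      linear_combination sin_sq_add_cos_sq x, h1] at e1
    have e3 := hleib (sin x) (sin x)
    have e4 := hleib (cos x) (cos x)
    have h := hleib (tan x) (cos x)
    rw [Real.tan_mul_cos hcx] at h
    have h2 : tan x * cos x = sin x := Real.tan_mul_cos hcx
    have et' : d (tan x) * cos x ^ 2 = d x := by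
      have et := ht x hcx
      rw [eq_div_iff (pow_ne_zero 2 hcx)] at et
      exact et
    have epyth := sin_sq_add_cos_sq x
    linear_combination (cos x^2) * h + (cos x * d (cos x)) * h2 + cos x * et'
      - (sin x/2) * e1 - (sin x/2) * e3 - (sin x/2) * e4 - d (sin x) * epyth

end Aux4

section Aux5
variable (d : ℝ → ℝ)

lemma aux_hk_to_hs (hleib : ∀ x y : ℝ, d (x * y) = x * d y + y * d x)
    (hk : ∀ x : ℝ, Real.sin x ≠ 0 →
      d (Real.cos x / Real.sin x) = -(d x / (Real.sin x)^2)) :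
    ∀ x : ℝ, d (Real.sin x) = Real.cos x * d x := by
  have h0 : d 0 = 0 := aux_d0 d hleib
  have h1 : d 1 = 0 := aux_d1 d hleib
  have hneg1 : d (-1) = 0 := aux_dneg1 d hleib
  have hneg := aux_dneg d hleib
  have hpole : ∀ k : ℤ, d (π/2 + (k:ℝ)*π) = 0 := by
    intro k
    have hsin : sin (π/2 + (k:ℝ)*π) = (-1)^k := by
      rw [Real.sin_add_int_mul_pi, Real.sin_pi_div_two, mul_one]
    have hcos : cos (π/2 + (k:ℝ)*π) = 0 := by
      rw [Real.cos_add_int_mul_pi, Real.cos_pi_div_two, mul_zero]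
    have hsne : sin (π/2 + (k:ℝ)*π) ≠ 0 := by
      rw [hsin]; exact zpow_ne_zero _ (by norm_num)
    have h := hk _ hsne
    rw [hcos, zero_div, h0] at h
    have h' : d (π/2 + (k:ℝ)*π) / sin (π/2 + (k:ℝ)*π)^2 = 0 := by linarith
    rcases div_eq_zero_iff.mp h' with h'' | h''
    · exact h''
    · exact absurd h'' (pow_ne_zero 2 hsne)
  have hsq : ∀ m : ℤ, sin (π/4 + (m:ℝ)*π) ≠ 0 := by
    intro m
    rw [Real.sin_add_int_mul_pi, Real.sin_pi_div_four]
    exact mul_ne_zero (by positivity) (by positivity)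
  have hquarter : ∀ m : ℤ, d (π/4 + (m:ℝ)*π) = 0 := by
    intro m
    have hcot : cos (π/4 + (m:ℝ)*π) / sin (π/4 + (m:ℝ)*π) = 1 := by
      rw [Real.sin_add_int_mul_pi, Real.cos_add_int_mul_pi, Real.sin_pi_div_four,
        Real.cos_pi_div_four]
      rw [div_self]
      exact mul_ne_zero (by positivity) (by positivity)
    have h := hk _ (hsq m)
    rw [hcot, h1] at h
    have h' : d (π/4 + (m:ℝ)*π) / sin (π/4 + (m:ℝ)*π)^2 = 0 := by linarith
    rcases div_eq_zero_iff.mp h' with h'' | h''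
    · exact h''
    · exact absurd h'' (pow_ne_zero 2 (hsq m))
  have hd4 : d (π/4) = 0 := by
    have := hquarter 0; norm_num at this; exact this
  have h4m : ∀ m : ℤ, d (4*(m:ℝ)+1) = 0 := by
    intro m
    have h := hleib (4*(m:ℝ)+1) (π/4)
    rw [show (4*(m:ℝ)+1) * (π/4) = π/4 + (m:ℝ)*π by ring, hquarter m, hd4] at h
    have hz : (π/4) * d (4*(m:ℝ)+1) = 0 := by linarith
    rcases mul_eq_zero.mp hz with h' | h'
    · exact absurd h' (by positivity)
    · exact h'
  have hodd : ∀ k : ℤ, d (2*(k:ℝ)+1) = 0 := by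
    intro k
    rcases Int.even_or_odd k with ⟨m, hm⟩ | ⟨m, hm⟩
    · rw [show 2*(k:ℝ)+1 = 4*(m:ℝ)+1 by
        have : (k:ℝ) = (m:ℝ) + (m:ℝ) := by exact_mod_cast congrArg (Int.cast : ℤ → ℝ) hm
        rw [this]; ring]
      exact h4m m
    · rw [show 2*(k:ℝ)+1 = -(4*((-m-1:ℤ):ℝ)+1) by
        have : (k:ℝ) = 2*(m:ℝ) + 1 := by exact_mod_cast congrArg (Int.cast : ℤ → ℝ) hm
        push_cast; rw [this]; ring]
      rw [hneg, h4m (-m-1)]; ring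
  have hshs : ∀ x, sin x ≠ 0 → d (x + π) = d x := by
    intro x hsx
    have hsx' : sin (x + π) ≠ 0 := by rw [sin_add_pi]; simpa using hsx
    have h2 := hk (x + π) hsx'
    rw [cos_add_pi, sin_add_pi, neg_div_neg_eq, neg_sq] at h2
    have h3 : -(d x / sin x ^ 2) = -(d (x + π) / sin x ^ 2) := by rw [← hk x hsx, h2]
    field_simp at h3
    linarith
  have hd2 : d 2 = 0 := aux_d2_of_shift d hleib (fun x hs _ => hshs x hs)
  have hdpi2 : d (π/2) = 0 := by
    have := hpole 0; norm_num at this; exact this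
  have hdpi : d π = 0 := by
    have h := hleib 2 (π/2)
    rw [show (2:ℝ) * (π/2) = π by ring, hdpi2, hd2] at h
    linarith
  have hint := aux_d_int d hleib hd2 hodd
  have hkpi : ∀ k : ℤ, d ((k:ℝ)*π) = 0 := by
    intro k
    have h := hleib (k:ℝ) π
    rw [hdpi, hint k] at h; simpa using h
  have hsh : ∀ y, d (y + π) = d y := by
    intro y
    by_cases hsy : sin y = 0
    · obtain ⟨n, hn⟩ := Real.sin_eq_zero_iff.mp hsy
      have ha : d y = 0 := by rw [← hn]; exact hkpi n
      have hb : d (y + π) = 0 := by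
        rw [show y + π = ((n+1 : ℤ):ℝ) * π by push_cast [← hn]; ring]
        exact hkpi (n+1)
      rw [ha, hb]
    · exact hshs y hsy
  have hadd := aux_additive_of_shift d hleib π pi_ne_zero hsh
  intro x
  by_cases hsx : sin x = 0
  · obtain ⟨n, hn⟩ := Real.sin_eq_zero_iff.mp hsx
    have ha : d x = 0 := by rw [← hn]; exact hkpi n
    rw [hsx, ha, h0]; ring
  · have e1 : d (sin x * sin x + cos x * cos x) = d (sin x * sin x) + d (cos x * cos x) :=
      hadd _ _
    rw [show sin x * sin x + cos x * cos x = 1 by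
      linear_combination sin_sq_add_cos_sq x, h1] at e1
    have e3 := hleib (sin x) (sin x)
    have e4 := hleib (cos x) (cos x)
    have h := hleib (cos x / sin x) (sin x)
    rw [div_mul_cancel₀ _ hsx] at h
    have et' : d (cos x / sin x) * sin x ^ 2 = -(d x) := by
      have et := hk x hsx
      rw [show -(d x / sin x ^ 2) = -(d x) / sin x ^ 2 by ring,
        eq_div_iff (pow_ne_zero 2 hsx)] at et
      exact et
    have h2 : cos x / sin x * sin x = cos x := div_mul_cancel₀ _ hsx
    have epyth := sin_sq_add_cos_sq x
    -- h : d (cos x) = cos x / sin x * d (sin x) + sin x * d (cos x / sin x)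
    -- want: d (sin x) = cos x * d x
    have key : sin x * (d (sin x) - cos x * d x) = 0 := by
      linear_combination (-(sin x)^2 * cos x) * h - (sin x * cos x * d (sin x)) * h2
        - (sin x * cos x) * et' - (sin x^2/2) * e1 - (sin x^2/2) * e3 - (sin x^2/2) * e4
        - (sin x * d (sin x)) * epyth
    rcases mul_eq_zero.mp key with h' | h'
    · exact absurd h' hsx
    · linarith

end Aux5

/-- For a function `d : ℝ → ℝ` satisfying the Leibniz rule, being a derivation with
respect to the sine, cosine, tangent and cotangent functions are all equivalent. -/
theorem derivation_wrt_trig_equiv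
    (d : ℝ → ℝ) (hleib : ∀ x y : ℝ, d (x * y) = x * d y + y * d x) :
    ((∀ x : ℝ, d (Real.sin x) = Real.cos x * d x) ↔
      (∀ x : ℝ, d (Real.cos x) = -Real.sin x * d x)) ∧
    ((∀ x : ℝ, d (Real.sin x) = Real.cos x * d x) ↔
      (∀ x : ℝ, (¬ ∃ k : ℤ, x = Real.pi * k + Real.pi / 2) →
        d (Real.tan x) = d x / (Real.cos x) ^ 2)) ∧
    ((∀ x : ℝ, d (Real.sin x) = Real.cos x * d x) ↔
      (∀ x : ℝ, (¬ ∃ k : ℤ, x = Real.pi * k) →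
        d (Real.cos x / Real.sin x) = -(d x / (Real.sin x) ^ 2))) := by
  have hconvc : ∀ x : ℝ, (¬ ∃ k : ℤ, x = π * k + π / 2) ↔ Real.cos x ≠ 0 := by
    intro x
    have : (∃ k : ℤ, x = π * k + π / 2) ↔ Real.cos x = 0 := by
      rw [Real.cos_eq_zero_iff]
      constructor
      · rintro ⟨k, hk⟩; exact ⟨k, by rw [hk]; push_cast; ring⟩
      · rintro ⟨k, hk⟩; exact ⟨k, by rw [hk]; push_cast; ring⟩
    exact not_congr this
  have hconvs : ∀ x : ℝ, (¬ ∃ k : ℤ, x = π * k) ↔ Real.sin x ≠ 0 := by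
    intro x
    have : (∃ k : ℤ, x = π * k) ↔ Real.sin x = 0 := by
      rw [Real.sin_eq_zero_iff]
      constructor
      · rintro ⟨k, hk⟩; exact ⟨k, by rw [hk]; push_cast; ring⟩
      · rintro ⟨k, hk⟩; exact ⟨k, by rw [← hk]; push_cast; ring⟩
    exact not_congr this
  refine ⟨⟨fun hs => aux_hs_to_hc d hleib hs, fun hc => aux_hc_to_hs d hleib hc⟩,
    ⟨?_, ?_⟩, ⟨?_, ?_⟩⟩
  · intro hs x hx
    exact aux_hs_to_ht d hleib hs x ((hconvc x).mp hx)
  · intro htst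
    exact aux_ht_to_hs d hleib (fun x hcx => htst x ((hconvc x).mpr hcx))
  · intro hs x hx
    exact aux_hs_to_hk d hleib hs x ((hconvs x).mp hx)
  · intro hkst
    exact aux_hk_to_hs d hleib (fun x hsx => hkst x ((hconvs x).mpr hsx))
end

section
/- Let d : ℝ → ℝ satisfy the Leibniz rule d(xy) = x·d(y) + y·d(x) for all x, y ∈ ℝ, and assume that d(2) = 0. Then the following five statements are equivalent, and each of them implies that d is additive (hence a standard derivation): (i) d(sinh x) = cosh(x)·d(x) for all x ∈ ℝ; (ii) d(cosh x) = sinh(x)·d(x) for all x ∈ ℝ; (iii) d(tanh x) = d(x)/cosh²(x) for all x ∈ ℝ; (iv) d(coth x) = −d(x)/sinh²(x) for all x ∈ ℝ \ {0}, where coth x = cosh x / sinh x; (v) d(eˣ) = eˣ·d(x) for all x ∈ ℝ. -/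
/-!
Each of the five identities forces `d` to be additive. For `exp` this is the Leibniz rule applied
to `exp (x + y) = exp x * exp y`. For `cosh` and `tanh` it goes through the translation identity
`d (w + 1) = d w`: the double-angle formulas `cosh 2x + 1 = 2 cosh² x` and
`tanh 2x * (1 + tanh² x) = 2 tanh x` give it for `w = cosh 2x ≥ 1`, resp. `w = tanh² x ∈ (0, 1)`;
the Leibniz rule carries it along `w ↦ w⁻¹` and `w ↦ -1 - w` to every `w`, and then
`d (a + b) = d (a * (b / a + 1)) = d a + d b`. Once `d` is additive, the identities are linked by
`sinh 2x = 2 sinh x cosh x`, `sinh² = cosh² - 1`, `exp = sinh + cosh`, `tanh = sinh / cosh`,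
`exp 2x * (1 - tanh x) = 1 + tanh x` and `cosh / sinh = tanh⁻¹`.
-/

def LeibnizRule {R : Type*} [Mul R] [Add R] (d : R → R) : Prop :=
  ∀ x y : R, d (x * y) = x * d y + y * d x

namespace LeibnizRule

section CommRing

variable {R : Type*} [CommRing R] {d : R → R}

theorem map_one (hd : LeibnizRule d) : d 1 = 0 := by
  simpa using hd 1 1

theorem map_zero (hd : LeibnizRule d) : d 0 = 0 := by
  simpa using hd 0 0

theorem map_two_mul (hd : LeibnizRule d) (h2 : d 2 = 0) (x : R) : d (2 * x) = 2 * d x := by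
  simpa [h2] using hd 2 x

theorem map_neg [NoZeroDivisors R] [NeZero (2 : R)] (hd : LeibnizRule d) (x : R) :
    d (-x) = -d x := by
  have hneg_one : d (-1) = 0 := by
    have h := hd (-1) (-1)
    rw [neg_one_mul, neg_neg, hd.map_one] at h
    have h' : (2 : R) * d (-1) = 0 := by linear_combination h
    exact (mul_eq_zero.mp h').resolve_left two_ne_zero
  simpa [hneg_one] using hd (-1) x

end CommRing

section Field

variable {K : Type*} [Field K] {d : K → K}

/-- At `x = 0` both sides are `0`, by the conventions `0⁻¹ = 0` and `a / 0 = 0`. -/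
theorem map_inv (hd : LeibnizRule d) (x : K) : d x⁻¹ = -d x / x ^ 2 := by
  rcases eq_or_ne x 0 with rfl | hx
  · simp [hd.map_zero]
  have h := hd x x⁻¹
  rw [mul_inv_cancel₀ hx, hd.map_one] at h
  rw [eq_div_iff (pow_ne_zero 2 hx)]
  linear_combination (-x) * h - d x * mul_inv_cancel₀ hx

theorem map_inv_add_one (hd : LeibnizRule d) {w : K} (hw : d (w + 1) = d w) :
    d (w⁻¹ + 1) = d w⁻¹ := by
  rcases eq_or_ne w 0 with rfl | hw0
  · simp [hd.map_one, hd.map_zero]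
  rw [show w⁻¹ + 1 = (w + 1) * w⁻¹ by field_simp; ring, hd, hw, hd.map_inv]
  field_simp
  ring

theorem map_add_of_map_add_one (hd : LeibnizRule d) (h : ∀ w, d (w + 1) = d w) (x y : K) :
    d (x + y) = d x + d y := by
  rcases eq_or_ne x 0 with rfl | hx
  · simp [hd.map_zero]
  calc d (x + y) = d (x * (y / x + 1)) := by
        rw [mul_add, mul_div_cancel₀ _ hx, mul_one, add_comm y]
    _ = d (x * (y / x)) + d x := by rw [hd, hd, h]; ring
    _ = d x + d y := by rw [mul_div_cancel₀ _ hx, add_comm]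

end Field

section LinearOrderedField

variable {K : Type*} [Field K] [LinearOrder K] [IsStrictOrderedRing K] {d : K → K}

theorem map_add_one_of_nonneg (hd : LeibnizRule d) (h : ∀ w, 0 ≤ w → d (w + 1) = d w) (w : K) :
    d (w + 1) = d w := by
  have hle : ∀ w : K, w ≤ -1 → d (w + 1) = d w := fun w hw => by
    have := h (-1 - w) (by linarith)
    rw [show -1 - w + 1 = -w by ring, show -1 - w = -(w + 1) by ring, hd.map_neg,
      hd.map_neg] at this
    exact neg_inj.mp this.symm
  rcases le_or_gt 0 w with hw | hw
  · exact h w hw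
  rcases le_or_gt w (-1) with hw' | hw'
  · exact hle w hw'
  have hinv : w⁻¹ < -1 := by
    rwa [inv_lt_of_neg hw (by norm_num), inv_neg_one]
  simpa using hd.map_inv_add_one (hle w⁻¹ hinv.le)

theorem map_add_of_one_lt (hd : LeibnizRule d) (h2 : d 2 = 0)
    (h : ∀ w, 1 < w → d (w + 1) = d w) (x y : K) : d (x + y) = d x + d y := by
  refine hd.map_add_of_map_add_one (hd.map_add_one_of_nonneg fun w hw => ?_) x y
  rcases hw.eq_or_lt with rfl | hw0
  · rw [zero_add, hd.map_one, hd.map_zero]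
  rcases lt_trichotomy w 1 with hw1 | rfl | hw1
  · simpa using hd.map_inv_add_one (h w⁻¹ ((one_lt_inv₀ hw0).2 hw1))
  · rw [one_add_one_eq_two, h2, hd.map_one]
  · exact h w hw1

end LinearOrderedField

end LeibnizRule

namespace Real

theorem one_sub_tanh_sq (x : ℝ) : 1 - tanh x ^ 2 = (cosh x ^ 2)⁻¹ := by
  have := (cosh_pos x).ne'
  rw [tanh_eq_sinh_div_cosh]
  field_simp
  linear_combination cosh_sq x

theorem tanh_two_mul (x : ℝ) : tanh (2 * x) = 2 * tanh x / (1 + tanh x ^ 2) := by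
  have := (cosh_pos x).ne'
  have : cosh x ^ 2 + sinh x ^ 2 ≠ 0 := by positivity
  rw [tanh_eq_sinh_div_cosh, tanh_eq_sinh_div_cosh, sinh_two_mul, cosh_two_mul]
  field_simp

theorem exp_two_mul_mul_one_sub_tanh (x : ℝ) : exp (2 * x) * (1 - tanh x) = 1 + tanh x := by
  have := (cosh_pos x).ne'
  rw [tanh_eq_sinh_div_cosh, one_sub_div this, one_add_div this, cosh_sub_sinh, cosh_add_sinh,
    ← mul_div_assoc, ← exp_add]
  ring_nf

end Real

namespace LeibnizRule

open Real

variable {d : ℝ → ℝ}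

theorem cosh_of_sinh (hd : LeibnizRule d) (h2 : d 2 = 0)
    (hs : ∀ x, d (sinh x) = cosh x * d x) (x : ℝ) : d (cosh x) = sinh x * d x := by
  rcases eq_or_ne x 0 with rfl | hx
  · simp [hd.map_one]
  have key := hs (2 * x)
  rw [sinh_two_mul, mul_assoc, hd.map_two_mul h2, hd, hs, hd.map_two_mul h2, cosh_two_mul] at key
  apply mul_left_cancel₀ (sinh_ne_zero.2 hx)
  linear_combination key / 2

theorem map_cosh_add_one (hd : LeibnizRule d) (h2 : d 2 = 0)
    (hc : ∀ x, d (cosh x) = sinh x * d x) (x : ℝ) : d (cosh x + 1) = d (cosh x) := by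
  obtain ⟨y, rfl⟩ : ∃ y, x = 2 * y := ⟨x / 2, by ring⟩
  have e : cosh (2 * y) + 1 = 2 * (cosh y * cosh y) := by
    rw [cosh_two_mul]
    linear_combination -cosh_sq y
  rw [e, hd.map_two_mul h2, hd, hc, hc, hd.map_two_mul h2, sinh_two_mul]
  ring

theorem map_add_of_cosh (hd : LeibnizRule d) (h2 : d 2 = 0)
    (hc : ∀ x, d (cosh x) = sinh x * d x) (x y : ℝ) : d (x + y) = d x + d y :=
  hd.map_add_of_one_lt h2 (fun w hw => by
    simpa [cosh_arcosh hw.le] using hd.map_cosh_add_one h2 hc (arcosh w)) x y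

theorem sinh_of_cosh (hd : LeibnizRule d) (hc : ∀ x, d (cosh x) = sinh x * d x)
    (hadd : ∀ x y, d (x + y) = d x + d y) (x : ℝ) : d (sinh x) = cosh x * d x := by
  rcases eq_or_ne x 0 with rfl | hx
  · simp [hd.map_zero]
  have e : d (sinh x * sinh x) = d (cosh x * cosh x) := by
    rw [show sinh x * sinh x = cosh x * cosh x + -1 by linear_combination -cosh_sq x, hadd,
      hd.map_neg, hd.map_one, neg_zero, add_zero]
  rw [hd, hd, hc] at e
  apply mul_left_cancel₀ (sinh_ne_zero.2 hx)
  linear_combination e / 2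

theorem sinh_iff_cosh (hd : LeibnizRule d) (h2 : d 2 = 0) :
    (∀ x, d (sinh x) = cosh x * d x) ↔ ∀ x, d (cosh x) = sinh x * d x :=
  ⟨hd.cosh_of_sinh h2, fun hc => hd.sinh_of_cosh hc (hd.map_add_of_cosh h2 hc)⟩

theorem map_add_of_exp (hd : LeibnizRule d) (he : ∀ x, d (exp x) = exp x * d x) (x y : ℝ) :
    d (x + y) = d x + d y := by
  have e := hd (exp x) (exp y)
  rw [← exp_add, he, he, he] at e
  apply mul_left_cancel₀ (exp_ne_zero (x + y))
  rw [e, exp_add]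
  ring

theorem sinh_iff_exp (hd : LeibnizRule d) (h2 : d 2 = 0) :
    (∀ x, d (sinh x) = cosh x * d x) ↔ ∀ x, d (exp x) = exp x * d x := by
  constructor
  · intro hs x
    have hc := hd.cosh_of_sinh h2 hs
    rw [← sinh_add_cosh, hd.map_add_of_cosh h2 hc, hs, hc]
    ring
  · intro he x
    apply mul_left_cancel₀ (two_ne_zero (α := ℝ))
    rw [← hd.map_two_mul h2, show 2 * sinh x = exp x + -exp (-x) by rw [sinh_eq]; ring,
      hd.map_add_of_exp he, hd.map_neg, he, he, hd.map_neg, cosh_eq]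
    ring

theorem tanh_of_sinh_cosh (hd : LeibnizRule d) (hs : ∀ x, d (sinh x) = cosh x * d x)
    (hc : ∀ x, d (cosh x) = sinh x * d x) (x : ℝ) : d (tanh x) = d x / cosh x ^ 2 := by
  have := (cosh_pos x).ne'
  rw [tanh_eq_sinh_div_cosh, div_eq_mul_inv, hd, hd.map_inv, hs, hc]
  field_simp
  linear_combination d x * cosh_sq x

theorem map_tanh_sq_add_one (hd : LeibnizRule d) (h2 : d 2 = 0)
    (ht : ∀ x, d (tanh x) = d x / cosh x ^ 2) {x : ℝ} (hx : tanh x ≠ 0) :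
    d (tanh x ^ 2 + 1) = d (tanh x ^ 2) := by
  have ht' : ∀ x, d (tanh x) = (1 - tanh x ^ 2) * d x := fun x => by
    rw [ht, one_sub_tanh_sq, div_eq_inv_mul]
  have hu : tanh (2 * x) * (1 + tanh x ^ 2) = 2 * tanh x := by
    rw [tanh_two_mul, div_mul_cancel₀ _ (by positivity)]
  have hu0 : tanh (2 * x) ≠ 0 := by
    intro h
    rw [h, zero_mul] at hu
    exact hx (by linarith)
  have e := hd (tanh (2 * x)) (1 + tanh x ^ 2)
  rw [hu, hd.map_two_mul h2, ht', ht', hd.map_two_mul h2] at e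
  have hsq : d (tanh x ^ 2) = 2 * tanh x * ((1 - tanh x ^ 2) * d x) := by
    rw [sq, hd, ht']
    ring
  rw [add_comm, hsq]
  apply mul_left_cancel₀ hu0
  linear_combination (-1) * e + 2 * d x * (tanh (2 * x) + tanh x) * hu

theorem map_add_of_tanh (hd : LeibnizRule d) (h2 : d 2 = 0)
    (ht : ∀ x, d (tanh x) = d x / cosh x ^ 2) (x y : ℝ) : d (x + y) = d x + d y := by
  refine hd.map_add_of_one_lt h2 (fun w hw => ?_) x y
  have hw0 : 0 < w := zero_lt_one.trans hw
  set s := √(w⁻¹)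
  have hs0 : 0 < s := sqrt_pos.2 (inv_pos.2 hw0)
  have hs : s ∈ Set.Ioo (-1) 1 :=
    ⟨by linarith, (sqrt_lt' one_pos).2 (by simpa using inv_lt_one_of_one_lt₀ hw)⟩
  have := hd.map_tanh_sq_add_one h2 ht (x := artanh s) (by rw [tanh_artanh hs]; exact hs0.ne')
  rw [tanh_artanh hs, sq_sqrt (inv_nonneg.2 hw0.le)] at this
  simpa using hd.map_inv_add_one this

theorem exp_of_tanh (hd : LeibnizRule d) (h2 : d 2 = 0)
    (ht : ∀ x, d (tanh x) = d x / cosh x ^ 2) (x : ℝ) : d (exp x) = exp x * d x := by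
  have hadd := hd.map_add_of_tanh h2 ht
  obtain ⟨y, rfl⟩ : ∃ y, x = 2 * y := ⟨x / 2, by ring⟩
  have key := exp_two_mul_mul_one_sub_tanh y
  have e := hd (exp (2 * y)) (1 - tanh y)
  rw [key, hadd, sub_eq_add_neg, hadd, hd.map_one, hd.map_neg, ht, div_eq_inv_mul,
    ← one_sub_tanh_sq] at e
  rw [hd.map_two_mul h2]
  apply mul_left_cancel₀ (sub_ne_zero.2 (tanh_lt_one y).ne')
  linear_combination -e - d y * (1 - tanh y) * key

theorem sinh_iff_tanh (hd : LeibnizRule d) (h2 : d 2 = 0) :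
    (∀ x, d (sinh x) = cosh x * d x) ↔ ∀ x, d (tanh x) = d x / cosh x ^ 2 :=
  ⟨fun hs => hd.tanh_of_sinh_cosh hs (hd.cosh_of_sinh h2 hs),
    fun ht => (hd.sinh_iff_exp h2).2 (hd.exp_of_tanh h2 ht)⟩

theorem tanh_iff_coth (hd : LeibnizRule d) :
    (∀ x, d (tanh x) = d x / cosh x ^ 2) ↔
      ∀ x, x ≠ 0 → d (cosh x / sinh x) = -(d x / sinh x ^ 2) := by
  constructor
  · intro ht x hx
    have := (cosh_pos x).ne'
    have := sinh_ne_zero.2 hx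
    rw [← inv_div, ← tanh_eq_sinh_div_cosh, hd.map_inv, ht, tanh_eq_sinh_div_cosh]
    field_simp
  · intro hco x
    rcases eq_or_ne x 0 with rfl | hx
    · simp [hd.map_zero]
    have := (cosh_pos x).ne'
    have := sinh_ne_zero.2 hx
    rw [tanh_eq_sinh_div_cosh, ← inv_div, hd.map_inv, hco x hx]
    field_simp

end LeibnizRule

/-- For a function `d : ℝ → ℝ` satisfying the Leibniz rule with `d 2 = 0`, being a
derivation with respect to the hyperbolic sine, hyperbolic cosine, hyperbolic tangent,
hyperbolic cotangent or exponential functions are all equivalent, and each of them implies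
that `d` is additive, hence a standard derivation. -/
theorem derivation_wrt_hyperbolic_equiv
    (d : ℝ → ℝ) (hleib : ∀ x y : ℝ, d (x * y) = x * d y + y * d x)
    (h2 : d 2 = 0) :
    ((∀ x : ℝ, d (Real.sinh x) = Real.cosh x * d x) ↔
      (∀ x : ℝ, d (Real.cosh x) = Real.sinh x * d x)) ∧
    ((∀ x : ℝ, d (Real.sinh x) = Real.cosh x * d x) ↔
      (∀ x : ℝ, d (Real.tanh x) = d x / (Real.cosh x) ^ 2)) ∧
    ((∀ x : ℝ, d (Real.sinh x) = Real.cosh x * d x) ↔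
      (∀ x : ℝ, x ≠ 0 → d (Real.cosh x / Real.sinh x) = -(d x / (Real.sinh x) ^ 2))) ∧
    ((∀ x : ℝ, d (Real.sinh x) = Real.cosh x * d x) ↔
      (∀ x : ℝ, d (Real.exp x) = Real.exp x * d x)) ∧
    (((∀ x : ℝ, d (Real.sinh x) = Real.cosh x * d x) ∨
      (∀ x : ℝ, d (Real.cosh x) = Real.sinh x * d x) ∨
      (∀ x : ℝ, d (Real.tanh x) = d x / (Real.cosh x) ^ 2) ∨
      (∀ x : ℝ, x ≠ 0 → d (Real.cosh x / Real.sinh x) = -(d x / (Real.sinh x) ^ 2)) ∨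
      (∀ x : ℝ, d (Real.exp x) = Real.exp x * d x)) →
      ∀ x y : ℝ, d (x + y) = d x + d y) := by
  have hd : LeibnizRule d := hleib
  have sinh_iff_cosh := hd.sinh_iff_cosh h2
  have tanh_iff_coth := hd.tanh_iff_coth
  refine ⟨sinh_iff_cosh, hd.sinh_iff_tanh h2, (hd.sinh_iff_tanh h2).trans tanh_iff_coth,
    hd.sinh_iff_exp h2, ?_⟩
  rintro (hs | hc | ht | hco | he)
  · exact hd.map_add_of_cosh h2 (sinh_iff_cosh.1 hs)
  · exact hd.map_add_of_cosh h2 hc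
  · exact hd.map_add_of_tanh h2 ht
  · exact hd.map_add_of_tanh h2 (tanh_iff_coth.2 hco)
  · exact hd.map_add_of_exp he
end

section
/- Let d : ℝ → ℝ satisfy the Leibniz rule d(xy) = x·d(y) + y·d(x) for all x, y ∈ ℝ, and assume that d(eˣ) = eˣ·d(x) holds for all x ∈ ℝ. Then d is additive, i.e., d(x+y) = d(x) + d(y) for all x, y ∈ ℝ, and hence d is a standard derivation. -/
/-- If `d : ℝ → ℝ` satisfies the Leibniz rule and is a derivation with respect to the
exponential function, then `d` is additive, hence a standard derivation. -/
theorem additive_of_leibniz_of_exp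
    (d : ℝ → ℝ) (hleib : ∀ x y : ℝ, d (x * y) = x * d y + y * d x)
    (hexp : ∀ x : ℝ, d (Real.exp x) = Real.exp x * d x) :
    ∀ x y : ℝ, d (x + y) = d x + d y := by
  intro x y
  have h := hexp (x + y)
  rw [Real.exp_add, hleib, hexp, hexp] at h
  have hne : Real.exp x * Real.exp y ≠ 0 := by positivity
  apply mul_left_cancel₀ hne
  rw [← h]; ring
end
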